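/- arXiv:2505.00957 — 2 statements merged into one kernel-verified Lean document; each statement's English description precedes it below -/
import Mathlib

section
/- Let p ≥ 2 be an integer, c ∈ ℂ, and set R := max{|c|, 2^{1/(p-1)}}. If z ∈ ℂ satisfies |z| > R, then, writing δ := |z| − R > 0, one has |f_c(z)| > |z|·(1 + (p−1)δ). -/
/-!
Write `k = p - 1`. The bound `2^(1/k) ≤ R` says `2 ≤ R^k`, and since `R ≥ 1` Bernoulli's
inequality gives `|z|^k = (R + δ)^k ≥ R^k + k δ ≥ 2 + k δ`. Hence
`|z^p + c| ≥ |z|·|z|^k - |c| ≥ |z|(2 + k δ) - R > |z|(1 + k δ)`, the last step because `R < |z|`.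
-/

lemma two_add_mul_le_add_pow {R δ : ℝ} {k : ℕ} (hR : 1 ≤ R) (hRk : 2 ≤ R ^ k) (hδ : 0 ≤ δ) :
    2 + k * δ ≤ (R + δ) ^ k := by
  have hbernoulli := pow_add_mul_le_add_pow (zero_le_one.trans hR) (by linarith) k (b := δ)
  have hkδ : (k : ℝ) * δ ≤ k * R ^ (k - 1) * δ :=
    calc (k : ℝ) * δ = k * 1 * δ := by ring
      _ ≤ k * R ^ (k - 1) * δ := by gcongr; exact one_le_pow₀ hR
  linarith

lemma mul_one_add_mul_lt_pow_succ_sub {C R δ : ℝ} {k : ℕ} (hCR : C ≤ R) (hR : 1 ≤ R)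
    (hRk : 2 ≤ R ^ k) (hδ : 0 < δ) :
    (R + δ) * (1 + k * δ) < (R + δ) ^ (k + 1) - C := by
  have hpow : (R + δ) * (2 + k * δ) ≤ (R + δ) ^ (k + 1) := by
    rw [pow_succ']
    exact mul_le_mul_of_nonneg_left (two_add_mul_le_add_pow hR hRk hδ.le) (by linarith)
  nlinarith

/-- If `|z| > R = max {|c|, 2^(1/(p-1))}` and `δ = |z| - R`, then
`|f_c(z)| > |z|·(1 + (p-1)·δ)`. -/
theorem abs_map_gt (p : ℕ) (hp : 2 ≤ p) (c : ℂ)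
    (R : ℝ) (hR : R = max ‖c‖ ((2 : ℝ) ^ (((p : ℝ) - 1)⁻¹)))
    (z : ℂ) (hz : R < ‖z‖)
    (δ : ℝ) (hδ : δ = ‖z‖ - R) :
    ‖z‖ * (1 + ((p : ℝ) - 1) * δ) < ‖z ^ p + c‖ := by
  obtain ⟨k, rfl⟩ : ∃ k, p = k + 1 := ⟨p - 1, by omega⟩
  have hk : ((k + 1 : ℕ) : ℝ) - 1 = k := by push_cast; ring
  have hkpos : (0 : ℝ) < k := by norm_cast; omega
  rw [hk] at hR ⊢
  have h2R : (2 : ℝ) ^ (k : ℝ)⁻¹ ≤ R := hR ▸ le_max_right _ _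
  have hR1 : 1 ≤ R := (Real.one_le_rpow one_le_two (by positivity)).trans h2R
  have hRk : 2 ≤ R ^ k := by
    rw [← Real.rpow_natCast]
    exact (Real.rpow_inv_le_iff_of_pos zero_le_two (by linarith) hkpos).mp h2R
  have hz' : ‖z‖ = R + δ := by rw [hδ]; ring
  calc ‖z‖ * (1 + k * δ)
      < ‖z‖ ^ (k + 1) - ‖c‖ := hz' ▸ mul_one_add_mul_lt_pow_succ_sub
          (hR ▸ le_max_left _ _) hR1 hRk (by linarith)
    _ = ‖z ^ (k + 1)‖ - ‖c‖ := by rw [norm_pow]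
    _ ≤ ‖z ^ (k + 1) + c‖ := norm_sub_le_norm_add _ _
end

section
/- Let p ≥ 2 and k ≥ 1 be integers, c = (c₁, …, c_k) ∈ ℂ^k, and define ‖η‖ := √((1/k) ∑_{j=1}^k |η_j|²) for η ∈ ℂ^k and R := max{‖c‖, 2^{1/(p-1)}}. For ζ ∈ ℂ^k, the following are equivalent: (1) the orbit of ζ under the componentwise map F_c : ζ ↦ (ζ₁^p + c₁, …, ζ_k^p + c_k) is bounded; (2) ‖F_c^m(ζ)‖ ≤ R for every positive integer m, i.e. √((1/k) ∑_{j=1}^k |f_{c_j}^m(ζ_j)|²) ≤ R for all m ≥ 1. -/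
/-!
Write `N` for the root-mean-square norm. The power-mean inequality gives `N w ^ p ≤ N (w ^ p)`,
so the triangle inequality yields `N (F_c w) ≥ N w ^ p - N c ≥ N w ^ p - R`. Once some iterate has
`N = A > R ≥ 2 ^ (1/(p-1))`, every later step multiplies `N` by at least `A ^ (p-1) - 1 > 1`, and
the orbit escapes. Conversely every coordinate is at most `√k · N`, so `N ≤ R` along the orbit
bounds it.
-/

open Finset Filter

/-- The multicomplex norm, read in idempotent coordinates. -/
noncomputable def rmsNorm {ι E : Type*} [Fintype ι] [SeminormedAddCommGroup E] (w : ι → E) : ℝ :=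
  √((1 / (Fintype.card ι : ℝ)) * ∑ j, ‖w j‖ ^ 2)

section

variable {ι E : Type*} [Fintype ι] [SeminormedAddCommGroup E]

lemma rmsNorm_fin {k : ℕ} (w : Fin k → E) :
    rmsNorm w = √((1 / (k : ℝ)) * ∑ j, ‖w j‖ ^ 2) := by
  rw [rmsNorm, Fintype.card_fin]

lemma rmsNorm_nonneg (w : ι → E) : 0 ≤ rmsNorm w := Real.sqrt_nonneg _

lemma rmsNorm_eq_mul_norm_toLp (w : ι → E) :
    rmsNorm w = √(1 / (Fintype.card ι : ℝ)) * ‖WithLp.toLp 2 w‖ := by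
  rw [rmsNorm, PiLp.norm_eq_of_L2, ← Real.sqrt_mul (by positivity)]

lemma rmsNorm_sub_rmsNorm_le (u v : ι → E) : rmsNorm u - rmsNorm v ≤ rmsNorm (u + v) := by
  simp only [rmsNorm_eq_mul_norm_toLp, ← mul_sub, WithLp.toLp_add]
  gcongr
  simpa using norm_sub_norm_le (WithLp.toLp 2 u) (-WithLp.toLp 2 v)

lemma rmsNorm_le_norm (w : ι → E) : rmsNorm w ≤ ‖w‖ := by
  rw [rmsNorm, Real.sqrt_le_left (norm_nonneg w)]
  calc (1 / (Fintype.card ι : ℝ)) * ∑ j, ‖w j‖ ^ 2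
      ≤ (1 / (Fintype.card ι : ℝ)) * ∑ _j : ι, ‖w‖ ^ 2 := by
        gcongr with j
        exact norm_le_pi_norm w j
    _ ≤ ‖w‖ ^ 2 := by
        rw [sum_const, card_univ, nsmul_eq_mul, ← mul_assoc]
        refine mul_le_of_le_one_left (by positivity) ?_
        rcases eq_or_ne (Fintype.card ι : ℝ) 0 with h | h
        · simp [h]
        · rw [one_div_mul_cancel h]

lemma norm_le_sqrt_card_mul_rmsNorm (w : ι → E) : ‖w‖ ≤ √(Fintype.card ι) * rmsNorm w := by
  rcases isEmpty_or_nonempty ι with hι | hι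
  · simp [Subsingleton.elim w 0]
  rw [rmsNorm_eq_mul_norm_toLp, ← mul_assoc, ← Real.sqrt_mul (by positivity),
    mul_one_div_cancel (by positivity), Real.sqrt_one, one_mul]
  exact pi_norm_le_iff_of_nonneg (norm_nonneg _) |>.2 fun j =>
    PiLp.norm_apply_le (WithLp.toLp 2 w) j

end

lemma pow_mean_le_mean_pow {ι : Type*} (s : Finset ι) {f : ι → ℝ} (hf : ∀ i ∈ s, 0 ≤ f i)
    {p : ℕ} (hp : p ≠ 0) :
    ((1 / (#s : ℝ)) * ∑ i ∈ s, f i) ^ p ≤ (1 / (#s : ℝ)) * ∑ i ∈ s, f i ^ p := by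
  obtain ⟨n, rfl⟩ := Nat.exists_eq_succ_of_ne_zero hp
  calc ((1 / (#s : ℝ)) * ∑ i ∈ s, f i) ^ (n + 1)
      = (1 / (#s : ℝ)) * ((∑ i ∈ s, f i) ^ (n + 1) / #s ^ n) := by ring
    _ ≤ (1 / (#s : ℝ)) * ∑ i ∈ s, f i ^ (n + 1) := by
      gcongr
      exact pow_sum_div_card_le_sum_pow hf n

lemma rmsNorm_pow_le_rmsNorm_pow {ι 𝕜 : Type*} [Fintype ι] [NormedDivisionRing 𝕜] (w : ι → 𝕜)
    {p : ℕ} (hp : p ≠ 0) : rmsNorm w ^ p ≤ rmsNorm (w ^ p) := by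
  rw [rmsNorm, rmsNorm, Real.le_sqrt (by positivity) (by positivity), ← pow_mul, pow_mul',
    Real.sq_sqrt (by positivity)]
  simpa only [Pi.pow_apply, norm_pow, card_univ, ← pow_mul, mul_comm p 2]
    using pow_mean_le_mean_pow univ (fun j _ => sq_nonneg ‖w j‖) hp

lemma tendsto_atTop_of_pow_sub_le {a : ℕ → ℝ} {R : ℝ} {p m : ℕ} (hR : 0 ≤ R)
    (hRp : 2 ≤ R ^ (p - 1)) (ha : ∀ n, a n ^ p - R ≤ a (n + 1)) (hm : R < a m) :
    Tendsto a atTop atTop := by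
  have hp : p - 1 ≠ 0 := by
    rintro h
    rw [h, pow_zero] at hRp
    norm_num at hRp
  set A := a m
  set s := A ^ (p - 1) - 1
  have hA : 0 < A := hR.trans_lt hm
  have hs : 1 < s := by linarith [pow_lt_pow_left₀ hm hR hp]
  have hgrowth : ∀ n, A * s ^ n ≤ a (n + m) := by
    intro n
    induction n with
    | zero => simp [A]
    | succ n ih =>
      set x := a (n + m)
      have hAx : A ≤ x := (le_mul_of_one_le_right hA.le (one_le_pow₀ hs.le)).trans ih
      have hxp : x * A ^ (p - 1) ≤ x ^ p :=
        calc x * A ^ (p - 1) ≤ x * x ^ (p - 1) := by gcongr; linarith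
          _ = x ^ p := by rw [← pow_succ', Nat.sub_add_cancel (by omega)]
      calc A * s ^ (n + 1) = s * (A * s ^ n) := by ring
        _ ≤ s * x := by gcongr
        _ = x * A ^ (p - 1) - x := by ring
        _ ≤ x ^ p - R := by linarith
        _ ≤ a (n + 1 + m) := by rw [add_right_comm]; exact ha _
  rw [← tendsto_add_atTop_iff_nat m]
  exact tendsto_atTop_mono hgrowth ((tendsto_pow_atTop_atTop_of_one_lt hs).const_mul_atTop hA)

theorem multicomplex_filledJulia_iff_norm_le_general (p k : ℕ) (hp : 2 ≤ p)
    (c ζ : Fin k → ℂ)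
    (R : ℝ)
    (hR : R = max (Real.sqrt ((1 / (k : ℝ)) * ∑ j, ‖c j‖ ^ 2))
      ((2 : ℝ) ^ (((p : ℝ) - 1)⁻¹))) :
    Bornology.IsBounded
        (Set.range fun n : ℕ =>
          (fun w : Fin k → ℂ => fun j => w j ^ p + c j)^[n + 1] ζ) ↔
      ∀ m : ℕ, 1 ≤ m →
        Real.sqrt ((1 / (k : ℝ)) *
          ∑ j, ‖
            ((fun w : Fin k → ℂ => fun j => w j ^ p + c j)^[m] ζ j)‖ ^ 2) ≤ R := by
  set F : (Fin k → ℂ) → (Fin k → ℂ) := fun w j => w j ^ p + c j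
  simp only [← rmsNorm_fin] at hR ⊢
  have hcR : rmsNorm c ≤ R := hR ▸ le_max_left _ _
  have hR0 : 0 ≤ R := (rmsNorm_nonneg c).trans hcR
  have hRp : 2 ≤ R ^ (p - 1) :=
    calc (2 : ℝ) = (2 ^ ((p - 1 : ℕ) : ℝ)⁻¹) ^ (p - 1) :=
          (Real.rpow_inv_natCast_pow (by norm_num) (by omega)).symm
      _ ≤ R ^ (p - 1) := by
          gcongr
          rw [hR, Nat.cast_pred (by omega)]
          exact le_max_right _ _
  have hstep (w : Fin k → ℂ) : rmsNorm w ^ p - R ≤ rmsNorm (F w) :=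
    calc rmsNorm w ^ p - R ≤ rmsNorm (w ^ p) - rmsNorm c := by
          gcongr
          exact rmsNorm_pow_le_rmsNorm_pow w (by omega)
      _ ≤ rmsNorm (F w) := rmsNorm_sub_rmsNorm_le _ _
  rw [isBounded_iff_forall_norm_le]
  constructor
  · rintro ⟨C, hC⟩ m -
    by_contra! hm
    have hescape := tendsto_atTop_of_pow_sub_le (a := fun n => rmsNorm (F^[n] ζ)) hR0 hRp
      (fun n => by simpa only [Function.iterate_succ_apply'] using hstep _) hm
    obtain ⟨n, hn⟩ := ((tendsto_add_atTop_iff_nat 1).2 hescape).eventually_gt_atTop C |>.exists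
    exact hn.not_ge ((rmsNorm_le_norm _).trans (hC _ ⟨n, rfl⟩))
  · refine fun h => ⟨√k * R, ?_⟩
    rintro _ ⟨n, rfl⟩
    calc ‖F^[n + 1] ζ‖ ≤ √k * rmsNorm (F^[n + 1] ζ) := by
          simpa using norm_le_sqrt_card_mul_rmsNorm (F^[n + 1] ζ)
      _ ≤ √k * R := by
          gcongr
          exact h _ (by omega)

/-- With the multicomplex norm `‖η‖ = √((1/k) ∑ |η_j|²)` and
`R = max {‖c‖, 2^(1/(p-1))}`, the orbit of `ζ ∈ ℂ^k` under the componentwise map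
`F_c` is bounded iff `‖F_c^m(ζ)‖ ≤ R` for every positive integer `m`. -/
theorem multicomplex_filledJulia_iff_norm_le (p k : ℕ) (hp : 2 ≤ p) (hk : 1 ≤ k)
    (c ζ : Fin k → ℂ)
    (R : ℝ)
    (hR : R = max (Real.sqrt ((1 / (k : ℝ)) * ∑ j, ‖c j‖ ^ 2))
      ((2 : ℝ) ^ (((p : ℝ) - 1)⁻¹))) :
    Bornology.IsBounded
        (Set.range fun n : ℕ =>
          (fun w : Fin k → ℂ => fun j => w j ^ p + c j)^[n + 1] ζ) ↔
      ∀ m : ℕ, 1 ≤ m →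
        Real.sqrt ((1 / (k : ℝ)) *
          ∑ j, ‖
            ((fun w : Fin k → ℂ => fun j => w j ^ p + c j)^[m] ζ j)‖ ^ 2) ≤ R :=
  multicomplex_filledJulia_iff_norm_le_general p k hp c ζ R hR
end
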